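/- Let G = (V,E) be a finite graph and let 0 < z < 1. Let R̄_z = (1/|V|) Σ_{∘∈V} R_z[G,∘] denote the average root-exposure probability at temperature z, and R̄_* = 1 - 2ν(G)/|V|. Then R̄_z + (|E|/|V|)·(log 2 / log z) ≤ R̄_* ≤ R̄_z. -/

import Mathlib

open scoped Classical

/-- A matching on a graph `G`: a set of edges of `G` that are pairwise non-adjacent. -/
def IsMatching {V : Type*} (G : SimpleGraph V) (M : Finset (Sym2 V)) : Prop :=
  (∀ e ∈ M, e ∈ G.edgeSet) ∧
    ∀ e ∈ M, ∀ f ∈ M, e ≠ f → ∀ v : V, v ∈ e → v ∉ f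

/-- The matching number `ν(G)`. -/
noncomputable def matchingNumber {V : Type*} [Fintype V] (G : SimpleGraph V) : ℕ :=
  sSup {n | ∃ M : Finset (Sym2 V), IsMatching G M ∧ M.card = n}

/-- The matching polynomial `P_G(z) = Σ_{M matching of G} z^{|V| - 2|M|}`. -/
noncomputable def matchingPolynomial {V : Type*} [Fintype V] (G : SimpleGraph V)
    (z : ℝ) : ℝ :=
  ∑ M ∈ Finset.univ.filter (fun M : Finset (Sym2 V) => IsMatching G M),
    z ^ (Fintype.card V - 2 * M.card)

/-- The root-exposure probability `R_z[G,∘] = z ⬝ P_{G-∘}(z) / P_G(z)`. -/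
noncomputable def rootExposure {V : Type*} [Fintype V] (G : SimpleGraph V)
    (r : V) (z : ℝ) : ℝ :=
  z * matchingPolynomial (G.induce {v | v ≠ r}) z / matchingPolynomial G z

/-!
Write `k(M) = |V| - 2|M|` for the number of vertices left exposed by a matching `M`. Counting
pairs (vertex, matching exposing it) gives `∑ᵥ z P_{G-v}(z) = ∑_M k(M) z^{k(M)}`, so `|V| R̄_z` is
the mean of `k` under the Gibbs weights `z^{k(M)} / P_G(z)`. Every `k(M)` is at least
`|V| - 2ν(G)`, which gives the upper bound on `R̄_*`. For the lower bound, Jensen's inequality for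
`exp` gives `mean(k) · log z⁻¹ ≤ log P_G(1) - log P_G(z)`; here `P_G(1) ≤ 2^|E|` since matchings
are edge sets, and `P_G(z) ≥ z^{|V| - 2ν(G)}` by the term of a maximum matching.
-/

open Finset Real

lemma sum_mul_pow_div_sum_pow_mul_log_inv_le {ι : Type*} {t : Finset ι} (ht : t.Nonempty)
    (k : ι → ℕ) {z : ℝ} (hz : 0 < z) :
    (∑ i ∈ t, (k i : ℝ) * z ^ k i) / (∑ i ∈ t, z ^ k i) * log z⁻¹
      ≤ log #t - log (∑ i ∈ t, z ^ k i) := by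
  set Z := ∑ i ∈ t, z ^ k i
  have hZ : 0 < Z := sum_pos (fun i _ => pow_pos hz _) ht
  have hweights : ∑ i ∈ t, z ^ k i / Z = 1 := by rw [← sum_div, div_self hZ.ne']
  have hjensen := convexOn_exp.map_sum_le (fun i _ => div_nonneg (pow_pos hz (k i)).le hZ.le)
    hweights (fun i _ => Set.mem_univ ((k i : ℝ) * log z⁻¹))
  have hexp : ∀ i, z ^ k i / Z * exp ((k i : ℝ) * log z⁻¹) = 1 / Z := fun i => by
    rw [exp_nat_mul, exp_log (inv_pos.2 hz), div_mul_eq_mul_div, ← mul_pow,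
      mul_inv_cancel₀ hz.ne', one_pow]
  simp only [smul_eq_mul, hexp, sum_const, nsmul_eq_mul, mul_one_div] at hjensen
  rw [← log_div (by positivity) hZ.ne', le_log_iff_exp_le (div_pos (by positivity) hZ)]
  refine le_of_eq_of_le (congrArg exp ?_) hjensen
  rw [div_mul_eq_mul_div, sum_mul, sum_div]
  exact sum_congr rfl fun i _ => by ring

section Matching

variable {V : Type*}

noncomputable def coveredVertices (M : Finset (Sym2 V)) : Finset V := M.biUnion Sym2.toFinset

lemma mem_coveredVertices {M : Finset (Sym2 V)} {v : V} :
    v ∈ coveredVertices M ↔ ∃ e ∈ M, v ∈ e := by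
  simp [coveredVertices, Sym2.mem_toFinset]

lemma IsMatching.card_coveredVertices {G : SimpleGraph V} {M : Finset (Sym2 V)}
    (hM : IsMatching G M) : #(coveredVertices M) = 2 * #M := by
  rw [coveredVertices, card_biUnion, sum_congr rfl fun e he =>
    Sym2.card_toFinset_of_not_isDiag e (G.not_isDiag_of_mem_edgeSet (hM.1 e he)),
    sum_const, smul_eq_mul, mul_comm]
  intro e he f hf hef
  exact disjoint_left.2 fun v hve hvf =>
    hM.2 e he f hf hef v (Sym2.mem_toFinset.1 hve) (Sym2.mem_toFinset.1 hvf)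

lemma isMatching_empty (G : SimpleGraph V) : IsMatching G ∅ := by
  constructor <;> simp

lemma isMatching_induce_iff (G : SimpleGraph V) (s : Set V) (M : Finset (Sym2 s)) :
    IsMatching (G.induce s) M ↔
      IsMatching G (M.map (Function.Embedding.subtype (· ∈ s)).sym2Map) := by
  constructor
  · rintro ⟨hedge, hdisj⟩
    refine ⟨fun e he => ?_, fun e he f hf hef v hve hvf => ?_⟩
    · obtain ⟨e', he', rfl⟩ := mem_map.1 he
      induction e' using Sym2.ind with
      | _ a b => exact hedge _ he'
    · obtain ⟨e', he', rfl⟩ := mem_map.1 he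
      obtain ⟨f', hf', rfl⟩ := mem_map.1 hf
      obtain ⟨w, hwe, rfl⟩ := Sym2.mem_map.1 hve
      obtain ⟨w', hwf, hww'⟩ := Sym2.mem_map.1 hvf
      cases Subtype.val_injective hww'
      exact hdisj e' he' f' hf' (fun h => hef (h ▸ rfl)) w hwe hwf
  · rintro ⟨hedge, hdisj⟩
    refine ⟨fun e he => ?_, fun e he f hf hef w hwe hwf => ?_⟩
    · induction e using Sym2.ind with
      | _ a b => exact hedge _ (mem_map_of_mem _ he)
    · exact hdisj _ (mem_map_of_mem _ he) _ (mem_map_of_mem _ hf)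
        ((Function.Embedding.injective _).ne hef) w (Sym2.mem_map.2 ⟨w, hwe, rfl⟩)
        (Sym2.mem_map.2 ⟨w, hwf, rfl⟩)

lemma map_filter_mem_eq_self (s : Set V) [Fintype s] {M : Finset (Sym2 V)}
    (hM : ↑(coveredVertices M) ⊆ s) :
    (univ.filter ((Function.Embedding.subtype (· ∈ s)).sym2Map · ∈ M)).map
      (Function.Embedding.subtype (· ∈ s)).sym2Map = M := by
  ext e
  refine ⟨fun he => ?_, fun he => mem_map.2 ⟨e.attachWith fun v hv => ?_, ?_, ?_⟩⟩
  · obtain ⟨e', he', rfl⟩ := mem_map.1 he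
    exact (mem_filter.1 he').2
  · exact hM (mem_coveredVertices.2 ⟨e, he, hv⟩)
  · simpa using he
  · simp

variable [Fintype V]

lemma IsMatching.card_compl_coveredVertices {G : SimpleGraph V} {M : Finset (Sym2 V)}
    (hM : IsMatching G M) : #(coveredVertices M)ᶜ = Fintype.card V - 2 * #M := by
  rw [card_compl, hM.card_coveredVertices]

lemma IsMatching.two_mul_card_le {G : SimpleGraph V} {M : Finset (Sym2 V)}
    (hM : IsMatching G M) : 2 * #M ≤ Fintype.card V :=
  hM.card_coveredVertices ▸ card_le_univ _

variable (G : SimpleGraph V)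

noncomputable def matchings : Finset (Finset (Sym2 V)) := univ.filter (IsMatching G)

variable {G} in
lemma mem_matchings {M : Finset (Sym2 V)} : M ∈ matchings G ↔ IsMatching G M := by
  simp [matchings]

lemma matchingPolynomial_eq_sum_matchings (z : ℝ) :
    matchingPolynomial G z = ∑ M ∈ matchings G, z ^ (Fintype.card V - 2 * #M) := rfl

lemma matchingPolynomial_induce (s : Set V) [Fintype s] (z : ℝ) :
    matchingPolynomial (G.induce s) z =
      ∑ M ∈ (matchings G).filter (fun M => ↑(coveredVertices M) ⊆ s),
        z ^ (Fintype.card s - 2 * #M) := by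
  refine sum_nbij' (Finset.map (Function.Embedding.subtype (· ∈ s)).sym2Map)
    (fun M => univ.filter ((Function.Embedding.subtype (· ∈ s)).sym2Map · ∈ M)) ?_ ?_ ?_ ?_ ?_
  · intro M hM
    simp only [mem_matchings, mem_filter, mem_univ, true_and] at hM ⊢
    refine ⟨(isMatching_induce_iff G s M).1 hM, fun v hv => ?_⟩
    obtain ⟨e, he, hve⟩ := mem_coveredVertices.1 hv
    obtain ⟨e', -, rfl⟩ := mem_map.1 he
    obtain ⟨w, -, rfl⟩ := Sym2.mem_map.1 hve
    exact w.2
  · intro M hM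
    simp only [mem_matchings, mem_filter, mem_univ, true_and] at hM ⊢
    rw [isMatching_induce_iff, map_filter_mem_eq_self s hM.2]
    exact hM.1
  · intro M _
    ext e
    simp only [mem_filter, mem_univ, true_and, mem_map']
  · intro M hM
    exact map_filter_mem_eq_self s (mem_filter.1 hM).2
  · intro M _
    rw [card_map]

lemma card_matchings_le : #(matchings G) ≤ 2 ^ #G.edgeFinset := by
  rw [← card_powerset]
  refine card_le_card fun M hM => mem_powerset.2 fun e he => ?_
  exact G.mem_edgeFinset.2 ((mem_matchings.1 hM).1 e he)

lemma bddAbove_card_isMatching :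
    BddAbove {n | ∃ M : Finset (Sym2 V), IsMatching G M ∧ #M = n} :=
  ⟨Fintype.card (Sym2 V), by rintro n ⟨M, -, rfl⟩; exact card_le_univ M⟩

lemma exists_isMatching_card_eq_matchingNumber :
    ∃ M : Finset (Sym2 V), IsMatching G M ∧ #M = matchingNumber G :=
  Nat.sSup_mem (s := {n | ∃ M : Finset (Sym2 V), IsMatching G M ∧ #M = n})
    ⟨0, ∅, isMatching_empty G, card_empty⟩ (bddAbove_card_isMatching G)

lemma IsMatching.card_le_matchingNumber {M : Finset (Sym2 V)} (hM : IsMatching G M) :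
    #M ≤ matchingNumber G :=
  le_csSup (bddAbove_card_isMatching G) ⟨M, hM, rfl⟩

lemma two_mul_matchingNumber_le_card : 2 * matchingNumber G ≤ Fintype.card V := by
  obtain ⟨M, hM, hcard⟩ := exists_isMatching_card_eq_matchingNumber G
  exact hcard ▸ hM.two_mul_card_le

variable {z : ℝ}

lemma matchingPolynomial_pos (hz : 0 < z) : 0 < matchingPolynomial G z :=
  sum_pos (fun _ _ => pow_pos hz _) ⟨∅, mem_matchings.2 (isMatching_empty G)⟩

lemma pow_le_matchingPolynomial (hz : 0 < z) :
    z ^ (Fintype.card V - 2 * matchingNumber G) ≤ matchingPolynomial G z := by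
  obtain ⟨M, hM, hcard⟩ := exists_isMatching_card_eq_matchingNumber G
  rw [← hcard, matchingPolynomial_eq_sum_matchings]
  exact single_le_sum (f := fun M => z ^ (Fintype.card V - 2 * #M))
    (fun _ _ => (pow_pos hz _).le) (mem_matchings.2 hM)

variable {G} in
lemma IsMatching.mul_pow_card_sub_one_sub {M : Finset (Sym2 V)} (hM : IsMatching G M) {v : V}
    (hv : v ∉ coveredVertices M) (z : ℝ) :
    z * z ^ (Fintype.card V - 1 - 2 * #M) = z ^ (Fintype.card V - 2 * #M) := by
  have : 2 * #M < Fintype.card V :=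
    hM.card_coveredVertices ▸ card_lt_univ_of_notMem hv
  rw [← pow_succ']
  congr 1
  omega

lemma mul_matchingPolynomial_induce_ne (v : V) (z : ℝ) :
    z * matchingPolynomial (G.induce {u | u ≠ v}) z = ∑ M ∈ matchings G,
      if v ∉ coveredVertices M then z ^ (Fintype.card V - 2 * #M) else 0 := by
  rw [matchingPolynomial_induce, mul_sum, sum_filter]
  refine sum_congr rfl fun M hM => ?_
  have hcovered : ↑(coveredVertices M) ⊆ {u | u ≠ v} ↔ v ∉ coveredVertices M :=
    ⟨fun h hv => h hv rfl, fun h u hu huv => h (huv ▸ hu)⟩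
  have hcard : Fintype.card {u | u ≠ v} = Fintype.card V - 1 := by
    simp [filter_ne', card_erase_of_mem]
  by_cases hv : v ∈ coveredVertices M
  · rw [if_neg (mt hcovered.1 (not_not.2 hv)), if_neg (not_not.2 hv)]
  · rw [if_pos (hcovered.2 hv), if_pos hv, hcard, (mem_matchings.1 hM).mul_pow_card_sub_one_sub hv]

lemma sum_mul_matchingPolynomial_induce_ne (z : ℝ) :
    ∑ v, z * matchingPolynomial (G.induce {u | u ≠ v}) z = ∑ M ∈ matchings G,
      ((Fintype.card V - 2 * #M : ℕ) : ℝ) * z ^ (Fintype.card V - 2 * #M) := by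
  simp_rw [mul_matchingPolynomial_induce_ne]
  rw [sum_comm]
  refine sum_congr rfl fun M hM => ?_
  rw [← sum_filter, sum_const, nsmul_eq_mul, filter_notMem_eq_sdiff, ← compl_eq_univ_sdiff,
    (mem_matchings.1 hM).card_compl_coveredVertices]

lemma sum_rootExposure_eq (z : ℝ) : ∑ v, rootExposure G v z =
    (∑ M ∈ matchings G, ((Fintype.card V - 2 * #M : ℕ) : ℝ) * z ^ (Fintype.card V - 2 * #M))
      / matchingPolynomial G z := by
  simp only [rootExposure, ← sum_div, sum_mul_matchingPolynomial_induce_ne]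

lemma card_sub_two_mul_matchingNumber_le_sum_rootExposure (hz : 0 < z) :
    ((Fintype.card V - 2 * matchingNumber G : ℕ) : ℝ) ≤ ∑ v, rootExposure G v z := by
  rw [sum_rootExposure_eq, le_div_iff₀ (matchingPolynomial_pos G hz),
    matchingPolynomial_eq_sum_matchings, mul_sum]
  gcongr with M hM
  exact (mem_matchings.1 hM).card_le_matchingNumber G

lemma sum_rootExposure_mul_log_inv_le (hz : 0 < z) :
    (∑ v, rootExposure G v z) * log z⁻¹ ≤
      #G.edgeFinset * log 2 + ((Fintype.card V - 2 * matchingNumber G : ℕ) : ℝ) * log z⁻¹ := by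
  have hjensen := sum_mul_pow_div_sum_pow_mul_log_inv_le
    ⟨∅, mem_matchings.2 (isMatching_empty G)⟩ (fun M => Fintype.card V - 2 * #M) hz
  have hcount : log #(matchings G) ≤ #G.edgeFinset * log 2 := by
    rw [← log_pow]
    exact log_le_log (by exact_mod_cast card_pos.2 ⟨∅, mem_matchings.2 (isMatching_empty G)⟩)
      (by exact_mod_cast card_matchings_le G)
  have hground : ((Fintype.card V - 2 * matchingNumber G : ℕ) : ℝ) * log z
      ≤ log (matchingPolynomial G z) := by
    rw [← log_pow]
    exact log_le_log (pow_pos hz _) (pow_le_matchingPolynomial G hz)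
  rw [matchingPolynomial_eq_sum_matchings] at hground
  rw [sum_rootExposure_eq, matchingPolynomial_eq_sum_matchings]
  rw [log_inv] at hjensen ⊢
  linarith

end Matching

/-- Uniform continuity around the zero-temperature point: for `0 < z < 1`,
`R̄_z + (|E|/|V|)(log 2 / log z) ≤ R̄_* ≤ R̄_z`, where `R̄_z` is the average
root-exposure probability and `R̄_* = 1 - 2ν(G)/|V|`. -/
theorem uniform_control_zero_temperature {V : Type*} [Fintype V] [Nonempty V]
    (G : SimpleGraph V) (z : ℝ) (hz0 : 0 < z) (hz1 : z < 1) :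
    (∑ v : V, rootExposure G v z) / (Fintype.card V : ℝ)
        + ((G.edgeFinset.card : ℝ) / (Fintype.card V : ℝ)) * (Real.log 2 / Real.log z)
      ≤ 1 - 2 * (matchingNumber G : ℝ) / (Fintype.card V : ℝ) ∧
    1 - 2 * (matchingNumber G : ℝ) / (Fintype.card V : ℝ)
      ≤ (∑ v : V, rootExposure G v z) / (Fintype.card V : ℝ) := by
  set R := ∑ v : V, rootExposure G v z
  set m : ℕ := Fintype.card V - 2 * matchingNumber G
  have hn : (0 : ℝ) < Fintype.card V := by exact_mod_cast Fintype.card_pos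
  have hm : 1 - 2 * (matchingNumber G : ℝ) / Fintype.card V = m / Fintype.card V := by
    rw [Nat.cast_sub (two_mul_matchingNumber_le_card G)]
    field_simp
    push_cast
    ring
  have hlog : log z < 0 := log_neg hz0 hz1
  have hsum_le : R + #G.edgeFinset * (log 2 / log z) ≤ m := by
    have := sum_rootExposure_mul_log_inv_le G hz0
    rw [log_inv] at this
    rw [mul_div_assoc', ← le_sub_iff_add_le', div_le_iff_of_neg hlog]
    linarith
  rw [hm]
  constructor
  · calc R / Fintype.card V + #G.edgeFinset / Fintype.card V * (log 2 / log z)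
        = (R + #G.edgeFinset * (log 2 / log z)) / Fintype.card V := by ring
      _ ≤ m / Fintype.card V := by gcongr
  · gcongr
    exact card_sub_two_mul_matchingNumber_le_sum_rootExposure G hz0
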